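/- Let p₀ > 1, U ⊂ B₁^{d-1}(0) an open set, and γ : U → ℝ real-analytic. Suppose the maximal operator M_Γ[𝟙_U] is bounded on L^{p₀}(ℝ^d). Then for every p > p₀ and every v ∈ U there is a neighborhood U_v of v such that for all λ ≥ 1, all u ∈ ℝ^{d-1}, and all β ∈ ℝ, the Lebesgue measure of {y ∈ U_v : |γ(y) + u·y − β| ≤ λ^{−1}} is at most C |c_v|^{−1/p} λ^{−1/p}, where c_v = ∇γ(v)·v − γ(v) and C is independent of λ, u, v, β. -/

import Mathlib

open MeasureTheory Set
open scoped ENNReal Topology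

noncomputable section

/-- `Ev n` is the Euclidean space `ℝ^n` (here playing the role of `ℝ^{d-1}`). -/
abbrev Ev (n : ℕ) := EuclideanSpace ℝ (Fin n)

/-- The maximal operator `M_Γ[𝟙_U]f(x) = sup_{t>0} |∫_U f(x' − ty, x_d − tγ(y)) dy|`. -/
def maxOpU (n : ℕ) (U : Set (Ev n)) (γ : Ev n → ℝ) (f : Ev n × ℝ → ℂ) (x : Ev n × ℝ) : ℝ :=
  ⨆ t ∈ Set.Ioi (0 : ℝ), ‖∫ y in U, f (x.1 - t • y, x.2 - t * γ y)‖

/-!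
Write `φ = γ + ⟪u, ·⟫`, `ψ(y) = ∇γ(y)·y − γ(y)`, `c = ψ(v) ≠ 0`, and take for `U_v` a ball around
`v` on which `|ψ − c| ≤ |c|/8`. Let `E` be the sublevel set `{|φ − β| ≤ λ⁻¹}` in that ball.

If `λ|c| < 8`, the bound `|E| ≤ |B₁|` suffices. Otherwise the identity `∇φ(y)·y = ψ(y) + φ(y)`
shows that the radial derivative of `φ` is within `|c|/4` of `c + β` on `E`.

* If `|c + β| ≥ |c|/2`, `φ` is strictly monotone along every ray while it stays in the sublevel
  band, so each ray meets `E` in a set of length `O(1/(λ|c|))`; integrating over dilates `ρ⁻¹E`,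
  `ρ ∈ (1/2, 1)`, gives `|E| = O(1/(λ|c|))`.
* If `|β| > |c|/2`, test the maximal operator on the indicator of the sheared slab
  `{|x'| < 3, |x_d + u·x'| < 3/λ}`. For `x` in the sheared cylinder
  `{|x'| < 1, x_d + u·x' ∈ [β, 2β]}`, of measure `≈ |β|`, some time `t ∈ [1, 2]` maps all of `E`
  into the slab, so `M f ≥ |E|` there; `L^{p₀}`-boundedness then gives
  `|E| ≲ (λ|β|)^{-1/p₀} ≲ (λ|c|)^{-1/p₀}`.

Since `λ|c| ≥ 1` and `p ≥ p₀ ≥ 1`, each bound is `≲ (λ|c|)^{-1/p}`.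
-/

open scoped Pointwise

theorem le_image_of_hasDerivAt_pos_on_level {g g' : ℝ → ℝ} {a s x : ℝ} (hsx : s ≤ x)
    (hg : ∀ t ∈ Icc s x, HasDerivAt g (g' t) t)
    (hlevel : ∀ t ∈ Icc s x, g t = a → 0 < g' t) (hs : a ≤ g s) : a ≤ g x :=
  image_le_of_deriv_right_lt_deriv_boundary' (f := fun _ => a) (f' := 0) continuousOn_const
    (fun _ _ => hasDerivWithinAt_const _ _ _) hs
    (fun t ht => (hg t ht).continuousAt.continuousWithinAt)
    (fun t ht => (hg t (Ico_subset_Icc_self ht)).hasDerivWithinAt)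
    (fun t ht hgt => hlevel t (Ico_subset_Icc_self ht) hgt.symm) ⟨hsx, le_rfl⟩

theorem image_le_of_hasDerivAt_pos_on_level {g g' : ℝ → ℝ} {a s x : ℝ} (hxs : x ≤ s)
    (hg : ∀ t ∈ Icc x s, HasDerivAt g (g' t) t)
    (hlevel : ∀ t ∈ Icc x s, g t = a → 0 < g' t) (hs : g s ≤ a) : g x ≤ a := by
  have hmem : ∀ t ∈ Icc (-s) (-x), -t ∈ Icc x s :=
    fun t ht => ⟨le_neg.1 ht.2, neg_le.1 ht.1⟩
  have key := le_image_of_hasDerivAt_pos_on_level (g := fun t => -g (-t))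
    (g' := fun t => g' (-t)) (a := -a) (neg_le_neg hxs)
    (fun t ht => by
      simpa using ((hg (-t) (hmem t ht)).comp t (hasDerivAt_neg t)).fun_neg)
    (fun t ht hgt => hlevel (-t) (hmem t ht) (neg_inj.1 hgt)) (by simpa using hs)
  simpa using key

theorem ordConnected_setOf_abs_sub_le {g g' : ℝ → ℝ} {I : Set ℝ} (hI : I.OrdConnected)
    {β δ : ℝ} (hg : ∀ s ∈ I, HasDerivAt g (g' s) s)
    (hg' : ∀ s ∈ I, |g s - β| ≤ δ → 0 < g' s) :
    {s | s ∈ I ∧ |g s - β| ≤ δ}.OrdConnected := by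
  refine ⟨fun s hs s' hs' x hx => ?_⟩
  have hδ : 0 ≤ δ := (abs_nonneg _).trans hs.2
  have hx' : x ∈ I := hI.out hs.1 hs'.1 hx
  have hlevel : ∀ t ∈ I, ∀ a, |a - β| ≤ δ → g t = a → 0 < g' t :=
    fun t ht a ha hgt => hg' t ht (hgt ▸ ha)
  have hlow := le_image_of_hasDerivAt_pos_on_level (a := β - δ) hx.1
    (fun t ht => hg t (hI.out hs.1 hx' ht))
    (fun t ht => hlevel t (hI.out hs.1 hx' ht) _ (by simp [abs_of_nonneg hδ]))
    (by linarith [(abs_sub_le_iff.1 hs.2).2])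
  have hup := image_le_of_hasDerivAt_pos_on_level (a := β + δ) hx.2
    (fun t ht => hg t (hI.out hx' hs'.1 ht))
    (fun t ht => hlevel t (hI.out hx' hs'.1 ht) _ (by simp [abs_of_nonneg hδ]))
    (by linarith [(abs_sub_le_iff.1 hs'.2).1])
  exact ⟨hx', abs_sub_le_iff.2 ⟨by linarith, by linarith⟩⟩

theorem volume_setOf_abs_sub_le_of_le_deriv {g g' : ℝ → ℝ} {I : Set ℝ} (hI : I.OrdConnected)
    {β δ m : ℝ} (hm : 0 < m) (hg : ∀ s ∈ I, HasDerivAt g (g' s) s)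
    (hg' : ∀ s ∈ I, |g s - β| ≤ δ → m ≤ g' s) :
    volume {s | s ∈ I ∧ |g s - β| ≤ δ} ≤ ENNReal.ofReal (2 * δ / m) := by
  set T := {s | s ∈ I ∧ |g s - β| ≤ δ}
  have hT : T.OrdConnected :=
    ordConnected_setOf_abs_sub_le hI hg fun s hs h => hm.trans_le (hg' s hs h)
  have hspread : ∀ s ∈ T, ∀ s' ∈ T, s ≤ s' → s' - s ≤ 2 * δ / m := by
    intro s hs s' hs' hss'
    have hmvt := hT.convex.mul_sub_le_image_sub_of_le_deriv
      (fun t ht => (hg t ht.1).continuousAt.continuousWithinAt)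
      (fun t ht => (hg t (interior_subset ht).1).differentiableAt.differentiableWithinAt)
      (fun t ht => (hg t (interior_subset ht).1).deriv ▸
        hg' t (interior_subset ht).1 (interior_subset ht).2)
      s hs s' hs' hss'
    rw [le_div_iff₀ hm]
    linarith [abs_sub_le_iff.1 hs.2, abs_sub_le_iff.1 hs'.2]
  refine (Real.volume_le_diam T).trans (Metric.ediam_le fun s hs s' hs' => ?_)
  rw [edist_dist, Real.dist_eq]
  refine ENNReal.ofReal_le_ofReal ?_
  rcases le_total s s' with h | h
  · rw [abs_sub_comm, abs_of_nonneg (sub_nonneg.2 h)]; exact hspread s hs s' hs' h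
  · rw [abs_of_nonneg (sub_nonneg.2 h)]; exact hspread s' hs' s hs h

theorem ContinuousOn.measurableSet_inter_preimage {α β : Type*} [TopologicalSpace α]
    [MeasurableSpace α] [OpensMeasurableSpace α] [TopologicalSpace β] {f : α → β}
    {s : Set α} {t : Set β} (hf : ContinuousOn f s) (hs : IsOpen s) (ht : IsClosed t) :
    MeasurableSet (s ∩ f ⁻¹' t) := by
  have : s ∩ f ⁻¹' t = s \ (s ∩ f ⁻¹' tᶜ) := by ext; simp
  rw [this]
  exact hs.measurableSet.diff (hf.isOpen_inter_preimage hs ht.isOpen_compl).measurableSet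

section Radial

variable {E : Type*} [NormedAddCommGroup E] [NormedSpace ℝ E] [MeasurableSpace E]
  [BorelSpace E] [FiniteDimensional ℝ E] (μ : Measure E) [μ.IsAddHaarMeasure]

theorem half_mul_measure_le_prod_setOf_smul_mem {T : Set E} (hT : MeasurableSet T) :
    ENNReal.ofReal (1 / 2) * μ T ≤
      (volume.prod μ) {q : ℝ × E | q.1 ∈ Ioo (1 / 2) 1 ∧ q.1 • q.2 ∈ T} := by
  set A := {q : ℝ × E | q.1 ∈ Ioo (1 / 2) 1 ∧ q.1 • q.2 ∈ T}
  have hA : MeasurableSet A :=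
    (measurableSet_Ioo.preimage measurable_fst).inter
      (hT.preimage (measurable_fst.smul measurable_snd))
  rw [Measure.prod_apply hA]
  calc ENNReal.ofReal (1 / 2) * μ T = ∫⁻ _ in Ioo (1 / 2 : ℝ) 1, μ T := by
        rw [setLIntegral_const, Real.volume_Ioo, mul_comm]; norm_num
    _ ≤ ∫⁻ ρ in Ioo (1 / 2 : ℝ) 1, μ (Prod.mk ρ ⁻¹' A) := by
        refine setLIntegral_mono' measurableSet_Ioo fun ρ hρ => ?_
        have hρ0 : 0 < ρ := by linarith [hρ.1]
        have hslice : Prod.mk ρ ⁻¹' A = ρ⁻¹ • T := by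
          ext x
          simp only [A, mem_preimage, mem_ofPred_eq, mem_inv_smul_set_iff₀ hρ0.ne']
          exact and_iff_right hρ
        rw [hslice, Measure.addHaar_smul]
        refine le_mul_of_one_le_left' ?_
        rw [← ENNReal.ofReal_one, abs_of_pos (by positivity)]
        exact ENNReal.ofReal_le_ofReal (one_le_pow₀ ((one_le_inv₀ hρ0).2 hρ.2.le))
    _ ≤ _ := setLIntegral_le_lintegral _ _

theorem measure_setOf_abs_sub_le_of_le_fderiv_apply_self {S : Set E} (hSo : IsOpen S)
    (hSc : Convex ℝ S) (hS1 : S ⊆ Metric.ball 0 1) {φ : E → ℝ}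
    (hφ : ∀ y ∈ S, DifferentiableAt ℝ φ y) {β δ m : ℝ} (hm : 0 < m)
    (hφ' : ∀ y ∈ S, |φ y - β| ≤ δ → m ≤ fderiv ℝ φ y y) :
    μ {y | y ∈ S ∧ |φ y - β| ≤ δ} ≤
      ENNReal.ofReal (4 * δ / m) * μ (Metric.ball 0 2) := by
  set T := {y | y ∈ S ∧ |φ y - β| ≤ δ}
  have hT : MeasurableSet T := by
    have : T = S ∩ φ ⁻¹' Metric.closedBall β δ := by ext; simp [T, Real.dist_eq]
    rw [this]
    exact ContinuousOn.measurableSet_inter_preimage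
      (fun y hy => (hφ y hy).continuousAt.continuousWithinAt) hSo Metric.isClosed_closedBall
  set A := {q : ℝ × E | q.1 ∈ Ioo (1 / 2) 1 ∧ q.1 • q.2 ∈ T}
  have hA : MeasurableSet A :=
    (measurableSet_Ioo.preimage measurable_fst).inter
      (hT.preimage (measurable_fst.smul measurable_snd))
  have hslice : ∀ x, volume ((fun ρ => (ρ, x)) ⁻¹' A) ≤
      (Metric.ball 0 2).indicator (fun _ => ENNReal.ofReal (2 * δ / m)) x := by
    intro x
    by_cases hx : x ∈ Metric.ball 0 2
    · rw [indicator_of_mem hx]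
      set I := {ρ : ℝ | ρ ∈ Ioo (1 / 2) 1 ∧ ρ • x ∈ S}
      have hI : I.OrdConnected := ordConnected_Ioo.inter
        (hSc.linear_preimage (LinearMap.toSpanSingleton ℝ E x)).ordConnected
      have hderiv : ∀ ρ ∈ I,
          HasDerivAt (fun ρ : ℝ => φ (ρ • x)) (fderiv ℝ φ (ρ • x) x) ρ := fun ρ hρ => by
        have h := (hφ _ hρ.2).hasFDerivAt.comp_hasDerivAt ρ ((hasDerivAt_id ρ).smul_const x)
        rwa [one_smul] at h
      have hmono : ∀ ρ ∈ I, |φ (ρ • x) - β| ≤ δ → m ≤ fderiv ℝ φ (ρ • x) x := by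
        intro ρ hρ hsub
        have h := hφ' _ hρ.2 hsub
        rw [map_smul, smul_eq_mul] at h
        nlinarith [hρ.1.1, hρ.1.2]
      have hA_slice : (fun ρ => (ρ, x)) ⁻¹' A = {ρ | ρ ∈ I ∧ |φ (ρ • x) - β| ≤ δ} := by
        ext ρ; simp [A, T, I, and_assoc]
      rw [hA_slice]
      exact volume_setOf_abs_sub_le_of_le_deriv hI hm hderiv hmono
    · rw [indicator_of_notMem hx, nonpos_iff_eq_zero]
      refine measure_mono_null (fun ρ hρ => hx ?_) measure_empty
      have h1 := hS1 hρ.2.1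
      simp only [Metric.mem_ball, dist_zero_right, norm_smul, Real.norm_eq_abs] at h1 ⊢
      rw [abs_of_pos (by linarith [hρ.1.1])] at h1
      nlinarith [hρ.1.1, norm_nonneg x]
  have hupper : (volume.prod μ) A ≤ ENNReal.ofReal (2 * δ / m) * μ (Metric.ball 0 2) := by
    rw [Measure.prod_apply_symm hA, ← lintegral_indicator_const measurableSet_ball]
    exact lintegral_mono hslice
  calc μ T = ENNReal.ofReal 2 * (ENNReal.ofReal (1 / 2) * μ T) := by
        rw [← mul_assoc, ← ENNReal.ofReal_mul zero_le_two]; norm_num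
    _ ≤ ENNReal.ofReal 2 * (ENNReal.ofReal (2 * δ / m) * μ (Metric.ball 0 2)) :=
        mul_le_mul_right ((half_mul_measure_le_prod_setOf_smul_mem μ hT).trans hupper) _
    _ = ENNReal.ofReal (4 * δ / m) * μ (Metric.ball 0 2) := by
        rw [← mul_assoc, ← ENNReal.ofReal_mul zero_le_two]; ring_nf

theorem measure_sublevel_le_of_le_abs_add {S : Set E} (hSo : IsOpen S) (hSc : Convex ℝ S)
    (hS1 : S ⊆ Metric.ball 0 1) {γ : E → ℝ} (hγ : ∀ y ∈ S, DifferentiableAt ℝ γ y)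
    {c : ℝ} (hψ : ∀ y ∈ S, |fderiv ℝ γ y y - γ y - c| ≤ |c| / 8) {lam : ℝ}
    (hlam : 8 ≤ lam * |c|) (ℓ : E →L[ℝ] ℝ) {β : ℝ} (hβ : |c| / 2 ≤ |c + β|) :
    μ {y | y ∈ S ∧ |γ y + ℓ y - β| ≤ lam⁻¹} ≤
      ENNReal.ofReal (16 / (lam * |c|)) * μ (Metric.ball 0 2) := by
  have hc : 0 < |c| := abs_pos.2 (by rintro rfl; norm_num at hlam)
  have hlam0 : 0 < lam := by nlinarith
  have hδ : lam⁻¹ ≤ |c| / 8 := by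
    rw [inv_le_iff_one_le_mul₀ hlam0]; linarith
  set φ := fun y => γ y + ℓ y
  -- multiplying by `σ = sign (c + β)` reduces both signs of `c + β` to the increasing case
  set σ : ℝ := if 0 ≤ c + β then 1 else -1
  have hσ : |σ| = 1 := by simp only [σ]; split_ifs <;> simp
  have hσcβ : σ * (c + β) = |c + β| := by
    simp only [σ]; split_ifs with h
    · rw [one_mul, abs_of_nonneg h]
    · rw [neg_one_mul, abs_of_neg (not_le.1 h)]
  have hσφ : ∀ y ∈ S, HasFDerivAt (fun y => σ * φ y) (σ • (fderiv ℝ γ y + ℓ)) y :=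
    fun y hy => ((hγ y hy).hasFDerivAt.add ℓ.hasFDerivAt).const_mul σ
  have hσφ' : ∀ y ∈ S, |σ * φ y - σ * β| ≤ lam⁻¹ →
      |c| / 4 ≤ fderiv ℝ (fun y => σ * φ y) y y := by
    intro y hy hsub
    have hderiv : fderiv ℝ (fun y => σ * φ y) y y = σ * (fderiv ℝ γ y y + ℓ y) := by
      rw [(hσφ y hy).fderiv]; rfl
    rw [← mul_sub, abs_mul, hσ, one_mul] at hsub
    have hclose : |σ * (fderiv ℝ γ y y + ℓ y - (c + β))| ≤ |c| / 4 := by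
      rw [abs_mul, hσ, one_mul, show fderiv ℝ γ y y + ℓ y - (c + β) =
        (fderiv ℝ γ y y - γ y - c) + (φ y - β) by ring]
      linarith [abs_add_le (fderiv ℝ γ y y - γ y - c) (φ y - β), hψ y hy]
    rw [hderiv]
    linarith [(abs_le.1 hclose).1]
  have h := measure_setOf_abs_sub_le_of_le_fderiv_apply_self μ hSo hSc hS1
    (fun y hy => (hσφ y hy).differentiableAt) (by positivity) hσφ'
  simp only [← mul_sub, abs_mul, hσ, one_mul] at h
  convert h using 2
  field_simp
  norm_num

end Radial

def shearedProd {α : Type*} (h : α → ℝ) (s : Set α) (I : Set ℝ) : Set (α × ℝ) :=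
  {z | z.1 ∈ s ∧ z.2 + h z.1 ∈ I}

theorem isOpen_shearedProd {α : Type*} [TopologicalSpace α] {h : α → ℝ} (hh : Continuous h)
    {s : Set α} (hs : IsOpen s) {I : Set ℝ} (hI : IsOpen I) : IsOpen (shearedProd h s I) :=
  (hs.preimage continuous_fst).inter (hI.preimage (continuous_snd.add (hh.comp continuous_fst)))

theorem measurableSet_shearedProd {α : Type*} [MeasurableSpace α] {h : α → ℝ}
    (hh : Measurable h) {s : Set α} (hs : MeasurableSet s) {I : Set ℝ}
    (hI : MeasurableSet I) : MeasurableSet (shearedProd h s I) :=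
  (hs.preimage measurable_fst).inter (hI.preimage (measurable_snd.add (hh.comp measurable_fst)))

theorem prod_shearedProd {α : Type*} [MeasurableSpace α] (μ : Measure α) [SFinite μ]
    {h : α → ℝ} (hh : Measurable h) {s : Set α} (hs : MeasurableSet s) {I : Set ℝ}
    (hI : MeasurableSet I) : (μ.prod volume) (shearedProd h s I) = μ s * volume I := by
  rw [Measure.prod_apply (measurableSet_shearedProd hh hs hI), mul_comm,
    ← lintegral_indicator_const hs]
  refine lintegral_congr fun x => ?_
  by_cases hx : x ∈ s
  · have : Prod.mk x ⁻¹' shearedProd h s I = (· + h x) ⁻¹' I := by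
      ext r; simp [shearedProd, hx]
    rw [this, indicator_of_mem hx, measure_preimage_add_right]
  · have : Prod.mk x ⁻¹' shearedProd h s I = ∅ := by
      ext r; simp [shearedProd, hx]
    rw [this, indicator_of_notMem hx, measure_empty]

theorem measureReal_le_norm_setIntegral_indicator {α β : Type*} [TopologicalSpace α]
    [MeasurableSpace α] [OpensMeasurableSpace α] [TopologicalSpace β] {μ : Measure α}
    {U : Set α} (hU : IsOpen U) (hUfin : μ U < ∞) {T : α → β} (hT : ContinuousOn T U)
    {N : Set β} (hN : IsOpen N) {s : Set α} (hs : s ⊆ U ∩ T ⁻¹' N) :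
    μ.real s ≤ ‖∫ y in U, N.indicator (fun _ => (1 : ℂ)) (T y) ∂μ‖ := by
  have hW : MeasurableSet (U ∩ T ⁻¹' N) := (hT.isOpen_inter_preimage hU hN).measurableSet
  have hint : ∫ y in U, N.indicator (fun _ => (1 : ℂ)) (T y) ∂μ = μ.real (U ∩ T ⁻¹' N) := by
    rw [setIntegral_congr_fun hU.measurableSet (g := (U ∩ T ⁻¹' N).indicator fun _ => (1 : ℂ))
        fun y hy => by by_cases hTy : T y ∈ N <;> simp [hy, hTy],
      integral_indicator_const _ hW, measureReal_restrict_apply hW,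
      inter_eq_left.2 inter_subset_left]
    simp
  rw [hint, Complex.norm_real, Real.norm_of_nonneg measureReal_nonneg]
  exact measureReal_mono hs ((measure_mono inter_subset_left).trans_lt hUfin).ne

theorem norm_setIntegral_le_maxOpU {n : ℕ} {U : Set (Ev n)} (hU : volume U < ∞)
    {γ : Ev n → ℝ} {f : Ev n × ℝ → ℂ} (hf : ∀ z, ‖f z‖ ≤ 1) (x : Ev n × ℝ) {t : ℝ}
    (ht : 0 < t) : ‖∫ y in U, f (x.1 - t • y, x.2 - t * γ y)‖ ≤ maxOpU n U γ f x := by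
  have hbound : ∀ t' : ℝ,
      ‖∫ y in U, f (x.1 - t' • y, x.2 - t' * γ y)‖ ≤ volume.real U :=
    fun t' => by simpa using norm_setIntegral_le_of_norm_le_const hU fun y _ => hf _
  refine le_ciSup_of_le ⟨volume.real U, ?_⟩ t
    (by rw [ciSup_pos (show t ∈ Ioi 0 from ht)])
  rintro _ ⟨t', rfl⟩
  exact Real.iSup_le (fun _ => hbound t') measureReal_nonneg

theorem measureReal_le_maxOpU {n : ℕ} {U : Set (Ev n)} (hU : IsOpen U)
    (hU1 : U ⊆ Metric.ball 0 1) {γ : Ev n → ℝ} (hγ : ContinuousOn γ U) {lam : ℝ}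
    (hlam : 0 < lam) {u : Ev n} {β : ℝ} {s : Set (Ev n)} (hsU : s ⊆ U)
    (hs : ∀ y ∈ s, |γ y + inner ℝ u y - β| ≤ lam⁻¹) {x : Ev n × ℝ}
    (hx : x ∈ shearedProd (inner ℝ u) (Metric.ball 0 1) (uIcc β (2 * β))) :
    volume.real s ≤ maxOpU n U γ
      ((shearedProd (inner ℝ u) (Metric.ball 0 3) (Metric.ball 0 (3 / lam))).indicator
        fun _ => 1) x := by
  have hUfin : volume U < ∞ := (measure_mono hU1).trans_lt measure_ball_lt_top
  obtain ⟨t, ht, htβ⟩ : ∃ t ∈ uIcc (1 : ℝ) 2, t * β = x.2 + inner ℝ u x.1 := by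
    rw [← mem_image, image_mul_const_uIcc, one_mul]; exact hx.2
  rw [uIcc_of_le one_le_two] at ht
  have ht0 : 0 < t := by linarith [ht.1]
  have hT : ContinuousOn (fun y => (x.1 - t • y, x.2 - t * γ y)) U :=
    (continuous_const.sub (continuous_const_smul t)).continuousOn.prodMk
      (continuousOn_const.sub (continuousOn_const.mul hγ))
  have hsN : s ⊆ U ∩ (fun y => (x.1 - t • y, x.2 - t * γ y)) ⁻¹'
      shearedProd (inner ℝ u) (Metric.ball 0 3) (Metric.ball 0 (3 / lam)) := by
    intro y hy
    have hy1 := hU1 (hsU hy)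
    have hx1 := hx.1
    simp only [Metric.mem_ball, dist_zero_right] at hy1 hx1
    refine ⟨hsU hy, ?_, ?_⟩
    · simp only [Metric.mem_ball, dist_zero_right]
      calc ‖x.1 - t • y‖ ≤ ‖x.1‖ + t * ‖y‖ := by
            simpa [norm_smul, abs_of_pos ht0] using norm_sub_le x.1 (t • y)
        _ < 3 := by nlinarith [ht.2, norm_nonneg y]
    · have hshift : x.2 - t * γ y + inner ℝ u (x.1 - t • y) =
          -(t * (γ y + inner ℝ u y - β)) := by
        rw [inner_sub_right, real_inner_smul_right]; linear_combination -htβ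
      simp only [Metric.mem_ball, dist_zero_right, Real.norm_eq_abs, hshift, abs_neg, abs_mul,
        abs_of_pos ht0]
      have hlam' : 0 < lam⁻¹ := inv_pos.2 hlam
      calc t * |γ y + inner ℝ u y - β| ≤ 2 * lam⁻¹ := by
            nlinarith [hs y hy, ht.2, abs_nonneg (γ y + inner ℝ u y - β)]
        _ < 3 / lam := by rw [div_eq_mul_inv]; linarith
  calc volume.real s ≤ _ :=
        measureReal_le_norm_setIntegral_indicator hU hUfin hT
          (isOpen_shearedProd (continuous_const.inner continuous_id) Metric.isOpen_ball
            Metric.isOpen_ball) hsN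
    _ ≤ _ := norm_setIntegral_le_maxOpU hUfin
          (fun z => (norm_indicator_le_norm_self (fun _ => (1 : ℂ)) z).trans norm_one.le) x ht0

theorem ofReal_mul_rpow_le_of_eLpNorm_le {α : Type*} [MeasurableSpace α] {μ : Measure α}
    {F : α → ℝ} {p : ℝ} (hp : 0 < p) {X N : Set α} (hX : MeasurableSet X)
    (hN : MeasurableSet N) {a A : ℝ} (ha : 0 ≤ a) (hF : ∀ x ∈ X, a ≤ F x)
    (h : eLpNorm F (ENNReal.ofReal p) μ ≤
      ENNReal.ofReal A * eLpNorm (N.indicator fun _ => (1 : ℂ)) (ENNReal.ofReal p) μ) :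
    ENNReal.ofReal a * μ X ^ (1 / p) ≤ ENNReal.ofReal A * μ N ^ (1 / p) := by
  have hp0 : ENNReal.ofReal p ≠ 0 := by simpa using hp
  calc ENNReal.ofReal a * μ X ^ (1 / p)
      = eLpNorm (X.indicator fun _ => a) (ENNReal.ofReal p) μ := by
        rw [eLpNorm_indicator_const hX hp0 ENNReal.ofReal_ne_top, ENNReal.toReal_ofReal hp.le,
          Real.enorm_of_nonneg ha]
    _ ≤ eLpNorm F (ENNReal.ofReal p) μ := by
        refine eLpNorm_mono fun x => ?_
        by_cases hx : x ∈ X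
        · rw [indicator_of_mem hx, Real.norm_of_nonneg ha]
          exact (hF x hx).trans (Real.le_norm_self _)
        · simp [hx]
    _ ≤ ENNReal.ofReal A * μ N ^ (1 / p) := by
        rwa [eLpNorm_indicator_const hN hp0 ENNReal.ofReal_ne_top, ENNReal.toReal_ofReal hp.le,
          enorm_one, one_mul] at h

section MaximalBound

variable {n : ℕ} {U : Set (Ev n)} {γ : Ev n → ℝ} {p A : ℝ}

theorem volume_mul_rpow_le_of_maxOpU_le (hU : IsOpen U) (hU1 : U ⊆ Metric.ball 0 1)
    (hγ : ContinuousOn γ U) (hp : 0 < p)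
    (hmax : ∀ f : Ev n × ℝ → ℂ, eLpNorm (maxOpU n U γ f) (ENNReal.ofReal p) volume ≤
      ENNReal.ofReal A * eLpNorm f (ENNReal.ofReal p) volume)
    {lam : ℝ} (hlam : 0 < lam) {u : Ev n} {β : ℝ} {s : Set (Ev n)} (hsU : s ⊆ U)
    (hs : ∀ y ∈ s, |γ y + inner ℝ u y - β| ≤ lam⁻¹) :
    volume s * (volume (Metric.ball (0 : Ev n) 1) * ENNReal.ofReal |β|) ^ (1 / p) ≤
      ENNReal.ofReal A *
        (volume (Metric.ball (0 : Ev n) 3) * ENNReal.ofReal (6 / lam)) ^ (1 / p) := by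
  have hu : Measurable (inner ℝ u : Ev n → ℝ) :=
    (continuous_const.inner continuous_id).measurable
  have h := ofReal_mul_rpow_le_of_eLpNorm_le hp
    (measurableSet_shearedProd hu measurableSet_ball measurableSet_uIcc)
    (measurableSet_shearedProd hu measurableSet_ball measurableSet_ball) measureReal_nonneg
    (fun x hx => measureReal_le_maxOpU hU hU1 hγ hlam hsU hs hx) (hmax _)
  rwa [ofReal_measureReal ((measure_mono (hsU.trans hU1)).trans_lt measure_ball_lt_top).ne,
    Measure.volume_eq_prod, prod_shearedProd _ hu measurableSet_ball measurableSet_uIcc,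
    prod_shearedProd _ hu measurableSet_ball measurableSet_ball, Real.volume_interval,
    Real.volume_ball, show 2 * β - β = β by ring, show 2 * (3 / lam) = 6 / lam by ring] at h

theorem volume_le_rpow_of_maxOpU_le (hU : IsOpen U) (hU1 : U ⊆ Metric.ball 0 1)
    (hγ : ContinuousOn γ U) (hp : 0 < p)
    (hmax : ∀ f : Ev n × ℝ → ℂ, eLpNorm (maxOpU n U γ f) (ENNReal.ofReal p) volume ≤
      ENNReal.ofReal A * eLpNorm f (ENNReal.ofReal p) volume)
    {lam : ℝ} (hlam : 0 < lam) {u : Ev n} {β c : ℝ} (hc : c ≠ 0) (hβ : |c| ≤ 2 * |β|)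
    {s : Set (Ev n)} (hsU : s ⊆ U) (hs : ∀ y ∈ s, |γ y + inner ℝ u y - β| ≤ lam⁻¹) :
    volume s ≤ ENNReal.ofReal A * ENNReal.ofReal (12 * 3 ^ n) ^ (1 / p) *
      ENNReal.ofReal (lam * |c|) ^ (-1 / p) := by
  have hc0 : 0 < |c| := abs_pos.2 hc
  have hβ0 : 0 < |β| := by linarith
  set M := volume (Metric.ball (0 : Ev n) 1) * ENNReal.ofReal |β|
  have hM0 : M ≠ 0 :=
    mul_ne_zero (Metric.measure_ball_pos volume 0 one_pos).ne' (by simpa using hβ0)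
  have hMtop : M ≠ ∞ := ENNReal.mul_ne_top measure_ball_lt_top.ne ENNReal.ofReal_ne_top
  have hB3 : volume (Metric.ball (0 : Ev n) 3) * ENNReal.ofReal (6 / lam) ≤
      M * ENNReal.ofReal (12 * 3 ^ n / (lam * |c|)) := by
    rw [Measure.addHaar_ball_of_pos _ _ three_pos, finrank_euclideanSpace_fin,
      mul_comm _ (volume _), mul_assoc, mul_assoc, ← ENNReal.ofReal_mul (by positivity),
      ← ENNReal.ofReal_mul hβ0.le]
    refine mul_le_mul_right (ENNReal.ofReal_le_ofReal ?_) _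
    rw [show |β| * (12 * 3 ^ n / (lam * |c|)) = 3 ^ n * (6 / lam) * (2 * |β| / |c|) by
      field_simp; ring]
    exact le_mul_of_one_le_right (by positivity) ((one_le_div hc0).2 hβ)
  have h : M ^ (1 / p) * volume s ≤ M ^ (1 / p) *
      (ENNReal.ofReal A * ENNReal.ofReal (12 * 3 ^ n / (lam * |c|)) ^ (1 / p)) :=
    calc M ^ (1 / p) * volume s
        ≤ ENNReal.ofReal A *
            (volume (Metric.ball (0 : Ev n) 3) * ENNReal.ofReal (6 / lam)) ^ (1 / p) := by
          rw [mul_comm]; exact volume_mul_rpow_le_of_maxOpU_le hU hU1 hγ hp hmax hlam hsU hs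
      _ ≤ ENNReal.ofReal A * (M * ENNReal.ofReal (12 * 3 ^ n / (lam * |c|))) ^ (1 / p) := by
          gcongr
      _ = _ := by rw [ENNReal.mul_rpow_of_nonneg _ _ (by positivity), mul_left_comm]
  rw [ENNReal.mul_le_mul_iff_right (ENNReal.rpow_pos (pos_iff_ne_zero.2 hM0) hMtop).ne'
    (ENNReal.rpow_ne_top_of_nonneg (by positivity) hMtop)] at h
  rwa [ENNReal.ofReal_div_of_pos (by positivity), ENNReal.div_rpow_of_nonneg _ _ (by positivity),
    div_eq_mul_inv, ← ENNReal.rpow_neg, ← neg_div, ← mul_assoc] at h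

end MaximalBound

theorem exists_ball_abs_fderiv_apply_self_sub_le {E : Type*} [NormedAddCommGroup E]
    [NormedSpace ℝ E] {U : Set E} (hU : IsOpen U) {γ : E → ℝ} (hγ : AnalyticOnNhd ℝ γ U)
    {v : E} (hv : v ∈ U) {ε : ℝ} (hε : 0 < ε) :
    ∃ r > 0, Metric.ball v r ⊆ U ∧
      ∀ y ∈ Metric.ball v r, |fderiv ℝ γ y y - γ y - (fderiv ℝ γ v v - γ v)| ≤ ε := by
  have hψ : ContinuousAt (fun y => fderiv ℝ γ y y - γ y) v :=
    ((hγ.fderiv.continuousOn.clm_apply continuousOn_id).sub hγ.continuousOn).continuousAt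
      (hU.mem_nhds hv)
  obtain ⟨r, hr, h⟩ := Metric.mem_nhds_iff.1 <|
    Filter.inter_mem (hψ.preimage_mem_nhds (Metric.closedBall_mem_nhds _ hε)) (hU.mem_nhds hv)
  exact ⟨r, hr, fun y hy => (h hy).2, fun y hy => by
    simpa only [mem_preimage, Metric.mem_closedBall, Real.dist_eq] using (h hy).1⟩

theorem volume_sublevel_le_rpow {n : ℕ} {U : Set (Ev n)} (hU : IsOpen U)
    (hU1 : U ⊆ Metric.ball 0 1) {γ : Ev n → ℝ} (hγ : ContinuousOn γ U) {p₀ p A : ℝ}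
    (hp₀ : 0 < p₀) (hp : 1 ≤ p) (hp₀p : p₀ ≤ p)
    (hmax : ∀ f : Ev n × ℝ → ℂ, eLpNorm (maxOpU n U γ f) (ENNReal.ofReal p₀) volume ≤
      ENNReal.ofReal A * eLpNorm f (ENNReal.ofReal p₀) volume)
    {S : Set (Ev n)} (hSo : IsOpen S) (hSc : Convex ℝ S) (hSU : S ⊆ U)
    (hγS : ∀ y ∈ S, DifferentiableAt ℝ γ y) {c : ℝ} (hc : c ≠ 0)
    (hψ : ∀ y ∈ S, |fderiv ℝ γ y y - γ y - c| ≤ |c| / 8) {lam : ℝ} (hlam : 1 ≤ lam)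
    (u : Ev n) (β : ℝ) :
    volume {y | y ∈ S ∧ |γ y + inner ℝ u y - β| ≤ lam⁻¹} ≤
      (8 * volume (Metric.ball (0 : Ev n) 1) + 16 * volume (Metric.ball (0 : Ev n) 2) +
        ENNReal.ofReal A * ENNReal.ofReal (12 * 3 ^ n) ^ (1 / p₀)) *
        ENNReal.ofReal (lam * |c|) ^ (-1 / p) := by
  have hc0 : 0 < |c| := abs_pos.2 hc
  set D := ENNReal.ofReal (lam * |c|)
  have hexp : ∀ {q : ℝ}, 0 < q → q ≤ p → 1 ≤ D → D ^ (-1 / q) ≤ D ^ (-1 / p) :=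
    fun hq hqp hD => ENNReal.rpow_le_rpow_of_exponent_le hD <| by
      rw [neg_div, neg_div, neg_le_neg_iff]; exact one_div_le_one_div_of_le hq hqp
  rcases lt_or_ge (lam * |c|) 8 with hsmall | hlarge
  · have hD8 : D ^ (1 / p) ≤ 8 :=
      calc D ^ (1 / p) ≤ 8 ^ (1 / p) :=
            ENNReal.rpow_le_rpow (by simpa [D] using ENNReal.ofReal_le_ofReal hsmall.le)
              (by positivity)
        _ ≤ 8 ^ (1 : ℝ) :=
            ENNReal.rpow_le_rpow_of_exponent_le (by norm_num) ((div_le_one (by linarith)).2 hp)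
        _ = 8 := ENNReal.rpow_one 8
    have h1 : 1 ≤ 8 * D ^ (-1 / p) := by
      rw [neg_div, ENNReal.rpow_neg]
      calc (1 : ℝ≥0∞) = 8 * 8⁻¹ :=
            (ENNReal.mul_inv_cancel (by norm_num) (by norm_num)).symm
        _ ≤ 8 * (D ^ (1 / p))⁻¹ := by gcongr
    calc volume {y | y ∈ S ∧ |γ y + inner ℝ u y - β| ≤ lam⁻¹}
        ≤ volume (Metric.ball (0 : Ev n) 1) := measure_mono fun y hy => hU1 (hSU hy.1)
      _ ≤ 8 * volume (Metric.ball (0 : Ev n) 1) * D ^ (-1 / p) := by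
          rw [mul_comm 8, mul_assoc]; exact le_mul_of_one_le_right' h1
      _ ≤ _ := by gcongr; exact le_add_right (le_add_right le_rfl)
  have hD1 : 1 ≤ D := ENNReal.one_le_ofReal.2 (by linarith)
  rcases le_or_gt (|c| / 2) |c + β| with htrans | hβ
  · calc volume {y | y ∈ S ∧ |γ y + inner ℝ u y - β| ≤ lam⁻¹}
        ≤ ENNReal.ofReal (16 / (lam * |c|)) * volume (Metric.ball (0 : Ev n) 2) :=
          measure_sublevel_le_of_le_abs_add volume hSo hSc (hSU.trans hU1) hγS hψ hlarge
            (innerSL ℝ u) htrans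
      _ = 16 * volume (Metric.ball (0 : Ev n) 2) * D ^ (-1 / 1 : ℝ) := by
          rw [ENNReal.ofReal_div_of_pos (by positivity), div_eq_mul_inv, neg_div, div_one,
            ENNReal.rpow_neg_one]
          simp only [ENNReal.ofReal_ofNat]; ring
      _ ≤ 16 * volume (Metric.ball (0 : Ev n) 2) * D ^ (-1 / p) :=
          mul_le_mul_right (hexp one_pos hp hD1) _
      _ ≤ _ := by gcongr; exact le_add_right le_add_self
  · have hcβ : |c| ≤ 2 * |β| := by
      have := abs_sub (c + β) β
      rw [add_sub_cancel_right] at this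
      linarith
    calc volume {y | y ∈ S ∧ |γ y + inner ℝ u y - β| ≤ lam⁻¹}
        ≤ ENNReal.ofReal A * ENNReal.ofReal (12 * 3 ^ n) ^ (1 / p₀) * D ^ (-1 / p₀) :=
          volume_le_rpow_of_maxOpU_le hU hU1 hγ hp₀ hmax (by linarith) hc hcβ
            (fun y hy => hSU hy.1) fun y hy => hy.2
      _ ≤ ENNReal.ofReal A * ENNReal.ofReal (12 * 3 ^ n) ^ (1 / p₀) * D ^ (-1 / p) :=
          mul_le_mul_right (hexp hp₀ hp₀p hD1) _
      _ ≤ _ := by gcongr; exact le_add_self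

theorem uniform_sublevel_set_bound_general
    (n : ℕ) (p₀ : ℝ) (hp₀ : 1 < p₀)
    (U : Set (Ev n)) (hUopen : IsOpen U) (hUball : U ⊆ Metric.ball 0 1)
    (γ : Ev n → ℝ) (hγ : AnalyticOnNhd ℝ γ U)
    (hmax : ∃ C > 0, ∀ f : Ev n × ℝ → ℂ,
      eLpNorm (maxOpU n U γ f) (ENNReal.ofReal p₀) volume ≤
        ENNReal.ofReal C * eLpNorm f (ENNReal.ofReal p₀) volume) :
    ∀ p : ℝ, p₀ < p → ∃ C > (0 : ℝ), ∀ v ∈ U, ∃ Uv ∈ 𝓝 v, Uv ⊆ U ∧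
      ∀ lam : ℝ, 1 ≤ lam → ∀ u : Ev n, ∀ β : ℝ,
        volume {y : Ev n | y ∈ Uv ∧ |γ y + (inner ℝ u y : ℝ) - β| ≤ lam⁻¹} ≤
          ENNReal.ofReal C * (ENNReal.ofReal |fderiv ℝ γ v v - γ v|) ^ (-(1 : ℝ) / p) *
            (ENNReal.ofReal lam) ^ (-(1 : ℝ) / p) := by
  obtain ⟨A, -, hA⟩ := hmax
  intro p hp
  set K : ℝ≥0∞ := 8 * volume (Metric.ball (0 : Ev n) 1) +
    16 * volume (Metric.ball (0 : Ev n) 2) +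
    ENNReal.ofReal A * ENNReal.ofReal (12 * 3 ^ n) ^ (1 / p₀)
  have hK : K ≠ ∞ := by
    simp [K, measure_ball_lt_top.ne, ENNReal.mul_eq_top, ENNReal.rpow_eq_top_iff]
  have hK0 : K ≠ 0 := by simp [K, (Metric.measure_ball_pos volume (0 : Ev n) one_pos).ne']
  refine ⟨K.toReal, ENNReal.toReal_pos hK0 hK, fun v hv => ?_⟩
  rw [ENNReal.ofReal_toReal hK]
  by_cases hc : fderiv ℝ γ v v - γ v = 0
  · refine ⟨U, hUopen.mem_nhds hv, subset_rfl, fun lam hlam u β => ?_⟩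
    have hpow : ENNReal.ofReal lam ^ (-1 / p) ≠ 0 :=
      (ENNReal.rpow_pos (ENNReal.ofReal_pos.2 (by linarith)) ENNReal.ofReal_ne_top).ne'
    rw [hc, abs_zero, ENNReal.ofReal_zero,
      ENNReal.zero_rpow_of_neg (div_neg_of_neg_of_pos neg_one_lt_zero (by linarith)),
      ENNReal.mul_top hK0, ENNReal.top_mul hpow]
    exact le_top
  obtain ⟨r, hr, hrU, hψ⟩ := exists_ball_abs_fderiv_apply_self_sub_le hUopen hγ hv
    (ε := |fderiv ℝ γ v v - γ v| / 8) (by positivity)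
  refine ⟨Metric.ball v r, Metric.ball_mem_nhds v hr, hrU, fun lam hlam u β => ?_⟩
  rw [mul_assoc, ← ENNReal.mul_rpow_of_ne_zero (by simpa using hc) (by simp; linarith),
    ← ENNReal.ofReal_mul (abs_nonneg _), mul_comm |_|]
  exact volume_sublevel_le_rpow hUopen hUball hγ.continuousOn (by linarith) (by linarith)
    hp.le hA Metric.isOpen_ball (convex_ball v r) hrU
    (fun y hy => (hγ y (hrU hy)).differentiableAt) hc hψ hlam u β

/-- Let `p₀ > 1`, `U ⊆ B₁^{d-1}(0)` open and `γ : U → ℝ` real-analytic.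
If `M_Γ[𝟙_U]` is bounded on `L^{p₀}(ℝ^d)`, then for every `p > p₀` and `v ∈ U` there is a
neighborhood `U_v` of `v` such that for all `λ ≥ 1`, `u ∈ ℝ^{d-1}` and `β ∈ ℝ`,
`|{y ∈ U_v : |γ(y) + u·y − β| ≤ λ^{-1}}| ≤ C |c_v|^{-1/p} λ^{-1/p}` with
`c_v = ∇γ(v)·v − γ(v)` and `C` independent of `λ, u, v, β`
(the right-hand side being `∞` when `c_v = 0`). -/
theorem uniform_sublevel_set_bound
    (n : ℕ) (hn : 1 ≤ n) (p₀ : ℝ) (hp₀ : 1 < p₀)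
    (U : Set (Ev n)) (hUopen : IsOpen U) (hUball : U ⊆ Metric.ball 0 1)
    (γ : Ev n → ℝ) (hγ : AnalyticOnNhd ℝ γ U)
    (hmax : ∃ C > 0, ∀ f : Ev n × ℝ → ℂ,
      eLpNorm (maxOpU n U γ f) (ENNReal.ofReal p₀) volume ≤
        ENNReal.ofReal C * eLpNorm f (ENNReal.ofReal p₀) volume) :
    ∀ p : ℝ, p₀ < p → ∃ C > (0 : ℝ), ∀ v ∈ U, ∃ Uv ∈ 𝓝 v, Uv ⊆ U ∧
      ∀ lam : ℝ, 1 ≤ lam → ∀ u : Ev n, ∀ β : ℝ,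
        volume {y : Ev n | y ∈ Uv ∧ |γ y + (inner ℝ u y : ℝ) - β| ≤ lam⁻¹} ≤
          ENNReal.ofReal C * (ENNReal.ofReal |fderiv ℝ γ v v - γ v|) ^ (-(1 : ℝ) / p) *
            (ENNReal.ofReal lam) ^ (-(1 : ℝ) / p) :=
  uniform_sublevel_set_bound_general n p₀ hp₀ U hUopen hUball γ hγ hmax
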